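/- For every m ≥ 1, Sym²(Ψ_m)·Sym²(Ψ_{m−1})⋯Sym²(Ψ_1) = Sym²([[B_m, κ_2 B_{m−1}^{(1)}/(t − θ^q)],[B_{m−1}, κ_2 B_{m−2}^{(1)}/(t − θ^q)]]); this is the case T_E = Sym² of the product formula for twisted inverses of the σ-matrix of φ. -/

import Mathlib

open Matrix

/-!
Write `Ψ_j = [[a_{j-1}/d_j, c/d_j], [1, 0]]` and `P_m = [[B_m, c σB_{m-1}/e], [B_{m-1}, c σB_{m-2}/e]]`.
Applying the twist `σ` to the recurrence `d_m B_m = a_{m-1} B_{m-1} + c B_{m-2}` gives the same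
recurrence shifted by one, `d_{n+1} σB_n = a_n σB_{n-1} + c σB_{n-2}`, because `σ` shifts the
coefficients and fixes `c`. Together with the recurrence itself this is exactly the statement
`Ψ_{n+1} P_n = P_{n+1}`, while `P_1 = Ψ_1` as soon as `e = d_1`. Hence `Ψ_m ⋯ Ψ_1 = P_m`, and since
`Sym²` is multiplicative the product of the `Sym²(Ψ_j)` is `Sym²(P_m)`.
-/

/-- The symmetric square of a `2 × 2` matrix: the `3 × 3` matrix representing the induced
map on the symmetric square with respect to the basis of symmetrized tensors. -/
def sym2Matrix {R : Type*} [CommRing R] (M : Matrix (Fin 2) (Fin 2) R) :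
    Matrix (Fin 3) (Fin 3) R :=
  !![M 0 0 ^ 2, 2 * (M 0 0 * M 0 1), M 0 1 ^ 2;
     M 0 0 * M 1 0, M 0 0 * M 1 1 + M 0 1 * M 1 0, M 0 1 * M 1 1;
     M 1 0 ^ 2, 2 * (M 1 0 * M 1 1), M 1 1 ^ 2]

theorem sym2Matrix_mul {R : Type*} [CommRing R] (A B : Matrix (Fin 2) (Fin 2) R) :
    sym2Matrix (A * B) = sym2Matrix A * sym2Matrix B := by
  ext i j
  fin_cases i <;> fin_cases j <;>
    simp [sym2Matrix, Matrix.mul_apply, Fin.sum_univ_succ] <;> ring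

def sym2MulHom (R : Type*) [CommRing R] :
    Matrix (Fin 2) (Fin 2) R →ₙ* Matrix (Fin 3) (Fin 3) R where
  toFun := sym2Matrix
  map_mul' := sym2Matrix_mul

theorem eq_map_of_mul_left_recurrence {M N : Type*} [Mul M] [Mul N] (f : M →ₙ* N)
    {Ψ P : ℤ → M} {S : ℤ → N} (hP1 : P 1 = Ψ 1)
    (hP : ∀ n, 1 ≤ n → Ψ (n + 1) * P n = P (n + 1))
    (hS1 : S 1 = f (Ψ 1)) (hS : ∀ n, 1 ≤ n → S (n + 1) = f (Ψ (n + 1)) * S n) :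
    ∀ m, 1 ≤ m → S m = f (P m) := by
  intro m hm
  induction m, hm using Int.leInduction with
  | base => rw [hS1, hP1]
  | succ n hn ih => rw [hS n hn, ih, ← map_mul, hP n hn]

theorem RingHom.map_pow_pow_of_map_eq_pow {R : Type*} [Semiring R] (σ : R →+* R) {x : R}
    {q : ℕ} (h : σ x = x ^ q) (n : ℕ) : σ (x ^ q ^ n) = x ^ q ^ (n + 1) := by
  rw [map_pow, h, ← pow_mul, ← pow_succ']

section TwistedInverse

variable {F : Type*} [Field F] (σ : F →+* F) (a d : ℤ → F) (c e : F) (B : ℤ → F)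

def twistedInvMatrix (j : ℤ) : Matrix (Fin 2) (Fin 2) F :=
  !![a (j - 1) / d j, c / d j; 1, 0]

def twistedInvProd (m : ℤ) : Matrix (Fin 2) (Fin 2) F :=
  !![B m, c * σ (B (m - 1)) / e; B (m - 1), c * σ (B (m - 2)) / e]

variable {σ a d c e B}

theorem map_apply_eq_of_recurrence
    (hB : ∀ m, 1 ≤ m → B m = (a (m - 1) * B (m - 1) + c * B (m - 2)) / d m)
    (hσa : ∀ n, 0 ≤ n → σ (a n) = a (n + 1)) (hσc : σ c = c)
    (hσd : ∀ n, 1 ≤ n → σ (d n) = d (n + 1)) {n : ℤ} (hn : 1 ≤ n) :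
    σ (B n) = (a n * σ (B (n - 1)) + c * σ (B (n - 2))) / d (n + 1) := by
  rw [hB n hn, map_div₀, map_add, map_mul, map_mul, hσa _ (by omega), hσc, hσd n hn,
    sub_add_cancel]

theorem twistedInvMatrix_mul_twistedInvProd
    (hB : ∀ m, 1 ≤ m → B m = (a (m - 1) * B (m - 1) + c * B (m - 2)) / d m)
    (hσa : ∀ n, 0 ≤ n → σ (a n) = a (n + 1)) (hσc : σ c = c)
    (hσd : ∀ n, 1 ≤ n → σ (d n) = d (n + 1)) {n : ℤ} (hn : 1 ≤ n) :
    twistedInvMatrix a d c (n + 1) * twistedInvProd σ c e B n =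
      twistedInvProd σ c e B (n + 1) := by
  have hBsucc := hB (n + 1) (by omega)
  have hσB := map_apply_eq_of_recurrence hB hσa hσc hσd hn
  rw [add_sub_cancel_right, show n + 1 - 2 = n - 1 by ring] at hBsucc
  rw [twistedInvMatrix, twistedInvProd, twistedInvProd, add_sub_cancel_right,
    show n + 1 - 2 = n - 1 by ring, hBsucc, hσB, mul_fin_two]
  ext i j
  fin_cases i <;> fin_cases j <;> simp <;> ring

theorem twistedInvProd_one
    (hB : ∀ m, 1 ≤ m → B m = (a (m - 1) * B (m - 1) + c * B (m - 2)) / d m)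
    (hB0 : B 0 = 1) (hBneg : B (-1) = 0) (he : e = d 1) :
    twistedInvProd σ c e B 1 = twistedInvMatrix a d c 1 := by
  have hB1 := hB 1 le_rfl
  norm_num [hB0, hBneg] at hB1
  norm_num [twistedInvProd, twistedInvMatrix, hB1, hB0, hBneg, he]

end TwistedInverse

theorem prod_sym2_twistedInv_sigmaMatrix_general
    (Fq : Type) [Field Fq] [Fintype Fq]
    (q : ℕ) (hq : q = Fintype.card Fq)
    (κ₁ : Polynomial Fq) (κ₂ : Fqˣ)
    (t θ' k1 k2 : RatFunc (RatFunc Fq))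
    (ht : t = RatFunc.X)
    (hθ' : θ' = algebraMap (RatFunc Fq) (RatFunc (RatFunc Fq)) RatFunc.X)
    (hk1 : k1 = algebraMap (RatFunc Fq) (RatFunc (RatFunc Fq))
      (algebraMap (Polynomial Fq) (RatFunc Fq) κ₁))
    (hk2 : k2 = algebraMap (RatFunc Fq) (RatFunc (RatFunc Fq))
      (algebraMap (Polynomial Fq) (RatFunc Fq) (Polynomial.C (κ₂ : Fq))))
    (σ : RatFunc (RatFunc Fq) →+* RatFunc (RatFunc Fq))
    (hσt : σ RatFunc.X = RatFunc.X)
    (hσc : ∀ x : RatFunc Fq,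
      σ (algebraMap (RatFunc Fq) (RatFunc (RatFunc Fq)) x)
        = algebraMap (RatFunc Fq) (RatFunc (RatFunc Fq)) (x ^ q))
    (B : ℤ → RatFunc (RatFunc Fq))
    (hBneg : ∀ m : ℤ, m < 0 → B m = 0)
    (hB0 : B 0 = 1)
    (hBrec : ∀ m : ℤ, 1 ≤ m →
      B m = (k1 ^ q ^ (m - 1).toNat * B (m - 1) + k2 * B (m - 2)) /
        (t - θ' ^ q ^ m.toNat))
    (Ψ : ℤ → Matrix (Fin 2) (Fin 2) (RatFunc (RatFunc Fq)))
    (hΨ : ∀ j : ℤ, 1 ≤ j →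
      Ψ j = !![k1 ^ q ^ (j - 1).toNat / (t - θ' ^ q ^ j.toNat),
               k2 / (t - θ' ^ q ^ j.toNat);
               1, 0])
    -- the products S_m = Sym²(Ψ_m) Sym²(Ψ_{m-1}) ⋯ Sym²(Ψ_1)
    (S : ℤ → Matrix (Fin 3) (Fin 3) (RatFunc (RatFunc Fq)))
    (hS1 : S 1 = sym2Matrix (Ψ 1))
    (hSrec : ∀ m : ℤ, 1 ≤ m → S (m + 1) = sym2Matrix (Ψ (m + 1)) * S m) :
    ∀ m : ℤ, 1 ≤ m →
      S m = sym2Matrix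
        !![B m, k2 * σ (B (m - 1)) / (t - θ' ^ q);
           B (m - 1), k2 * σ (B (m - 2)) / (t - θ' ^ q)] := by
  have hσt' : σ t = t := by rw [ht, hσt]
  have hσθ : σ θ' = θ' ^ q := by rw [hθ', hσc, map_pow]
  have hσk1 : σ k1 = k1 ^ q := by rw [hk1, hσc, map_pow]
  have hσk2 : σ k2 = k2 := by
    rw [hk2, hσc, ← map_pow, ← map_pow, hq, FiniteField.pow_card]
  have hσa : ∀ n : ℤ, 0 ≤ n → σ (k1 ^ q ^ n.toNat) = k1 ^ q ^ (n + 1).toNat := fun n hn => by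
    rw [σ.map_pow_pow_of_map_eq_pow hσk1, show (n + 1).toNat = n.toNat + 1 by omega]
  have hσd : ∀ n : ℤ, 1 ≤ n → σ (t - θ' ^ q ^ n.toNat) = t - θ' ^ q ^ (n + 1).toNat :=
    fun n hn => by
      rw [map_sub, hσt', σ.map_pow_pow_of_map_eq_pow hσθ,
        show (n + 1).toNat = n.toNat + 1 by omega]
  refine eq_map_of_mul_left_recurrence (sym2MulHom _) (Ψ := Ψ)
    (P := twistedInvProd σ k2 (t - θ' ^ q) B) ?_ (fun n hn => ?_) hS1 hSrec
  · rw [hΨ 1 le_rfl]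
    exact twistedInvProd_one (a := fun n => k1 ^ q ^ n.toNat) (d := fun n => t - θ' ^ q ^ n.toNat)
      hBrec hB0 (hBneg _ (by norm_num)) (by simp)
  · rw [hΨ (n + 1) (by omega)]
    exact twistedInvMatrix_mul_twistedInvProd (a := fun n => k1 ^ q ^ n.toNat)
      (d := fun n => t - θ' ^ q ^ n.toNat) hBrec hσa hσk2 hσd hn

/-- **Symmetric squares of products of twisted inverses of the σ-matrix.**
Over `K(t)` with `K = 𝔽_q(θ)` of odd characteristic, for the rank-2 Drinfeld module
`φ_t = θ + κ₁τ + κ₂τ²`, for every `m ≥ 1` one has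
`Sym²(Ψ_m)·Sym²(Ψ_{m-1})⋯Sym²(Ψ_1)
  = Sym²([[B_m, κ₂B_{m-1}^{(1)}/(t-θ^q)], [B_{m-1}, κ₂B_{m-2}^{(1)}/(t-θ^q)]])`:
the case `T_E = Sym²` of the product formula for twisted inverses of the σ-matrix. -/
theorem prod_sym2_twistedInv_sigmaMatrix
    (p : ℕ) [Fact p.Prime] (hp : p ≠ 2)
    (Fq : Type) [Field Fq] [Fintype Fq] [CharP Fq p]
    (q : ℕ) (hq : q = Fintype.card Fq)
    (κ₁ : Polynomial Fq) (κ₂ : Fqˣ)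
    (t θ' k1 k2 : RatFunc (RatFunc Fq))
    (ht : t = RatFunc.X)
    (hθ' : θ' = algebraMap (RatFunc Fq) (RatFunc (RatFunc Fq)) RatFunc.X)
    (hk1 : k1 = algebraMap (RatFunc Fq) (RatFunc (RatFunc Fq))
      (algebraMap (Polynomial Fq) (RatFunc Fq) κ₁))
    (hk2 : k2 = algebraMap (RatFunc Fq) (RatFunc (RatFunc Fq))
      (algebraMap (Polynomial Fq) (RatFunc Fq) (Polynomial.C (κ₂ : Fq))))
    (σ : RatFunc (RatFunc Fq) →+* RatFunc (RatFunc Fq))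
    (hσt : σ RatFunc.X = RatFunc.X)
    (hσc : ∀ x : RatFunc Fq,
      σ (algebraMap (RatFunc Fq) (RatFunc (RatFunc Fq)) x)
        = algebraMap (RatFunc Fq) (RatFunc (RatFunc Fq)) (x ^ q))
    (B : ℤ → RatFunc (RatFunc Fq))
    (hBneg : ∀ m : ℤ, m < 0 → B m = 0)
    (hB0 : B 0 = 1)
    (hBrec : ∀ m : ℤ, 1 ≤ m →
      B m = (k1 ^ q ^ (m - 1).toNat * B (m - 1) + k2 * B (m - 2)) /
        (t - θ' ^ q ^ m.toNat))
    (Ψ : ℤ → Matrix (Fin 2) (Fin 2) (RatFunc (RatFunc Fq)))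
    (hΨ : ∀ j : ℤ, 1 ≤ j →
      Ψ j = !![k1 ^ q ^ (j - 1).toNat / (t - θ' ^ q ^ j.toNat),
               k2 / (t - θ' ^ q ^ j.toNat);
               1, 0])
    -- the products S_m = Sym²(Ψ_m) Sym²(Ψ_{m-1}) ⋯ Sym²(Ψ_1)
    (S : ℤ → Matrix (Fin 3) (Fin 3) (RatFunc (RatFunc Fq)))
    (hS1 : S 1 = sym2Matrix (Ψ 1))
    (hSrec : ∀ m : ℤ, 1 ≤ m → S (m + 1) = sym2Matrix (Ψ (m + 1)) * S m) :
    ∀ m : ℤ, 1 ≤ m →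
      S m = sym2Matrix
        !![B m, k2 * σ (B (m - 1)) / (t - θ' ^ q);
           B (m - 1), k2 * σ (B (m - 2)) / (t - θ' ^ q)] :=
  prod_sym2_twistedInv_sigmaMatrix_general Fq q hq κ₁ κ₂ t θ' k1 k2 ht hθ' hk1 hk2 σ hσt hσc B hBneg
    hB0 hBrec Ψ hΨ S hS1 hSrec
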